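/- Theorem 1 (graph form): let G be a finite simple graph and let x and y be two vertices of G with degrees deg(x) = k₁ and deg(y) = k₂, where k₁ ≥ k₂. For a vertex v, let L_v = (l_1, …, l_Δ) be the vector whose i-th entry is the number of neighbors of v having degree i, where Δ is the maximum degree of G. Then the node distance d(x,y) := √2·D_H(L_x‖L_y) satisfies √k₁ − √k₂ ≤ d(x,y) ≤ √(k₁ + k₂). -/

import Mathlib

/-- Hellinger distance between two real vectors. -/
noncomputable def hellingerDist {m : ℕ} (P Q : Fin m → ℝ) : ℝ :=
  (1 / Real.sqrt 2) * Real.sqrt (∑ i, (Real.sqrt (P i) - Real.sqrt (Q i)) ^ 2)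

/-- The degree-distribution vector of a vertex `v`: its `i`-th entry (for `i = 1, …, Δ`,
with `Δ` the maximum degree of `G`) is the number of neighbors of `v` having degree `i`. -/
noncomputable def degVec {V : Type*} [Fintype V] [DecidableEq V]
    (G : SimpleGraph V) [DecidableRel G.Adj] (v : V) : Fin G.maxDegree → ℝ :=
  fun i => ((G.neighborFinset v).filter (fun w => G.degree w = i.1 + 1)).card

/-!
With `u_v := (√l_1, …, √l_Δ)` we have `d(x,y) = ‖u_x - u_y‖₂` and `‖u_v‖₂ = √deg v`, since the
neighbours of `v` are partitioned by their degrees `1, …, Δ`. The lower bound is the reverse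
triangle inequality in `ℓ²`, the upper bound the termwise estimate `(√p - √q)² ≤ p + q`.
-/

open Finset

section SqrtVector

variable {ι : Type*} [Fintype ι]

noncomputable def sqrtVec (P : ι → ℝ) : EuclideanSpace ℝ ι :=
  WithLp.toLp 2 fun i => Real.sqrt (P i)

lemma norm_sqrtVec {P : ι → ℝ} (hP : 0 ≤ P) : ‖sqrtVec P‖ = Real.sqrt (∑ i, P i) := by
  rw [EuclideanSpace.norm_eq]
  congr 1
  refine sum_congr rfl fun i _ => ?_
  rw [sqrtVec, Real.norm_eq_abs, sq_abs, Real.sq_sqrt (hP i)]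

lemma dist_sqrtVec (P Q : ι → ℝ) :
    dist (sqrtVec P) (sqrtVec Q) = Real.sqrt (∑ i, (Real.sqrt (P i) - Real.sqrt (Q i)) ^ 2) := by
  simp only [EuclideanSpace.dist_eq, sqrtVec, Real.dist_eq, sq_abs]

lemma sqrt_sum_sub_sqrt_sum_le {P Q : ι → ℝ} (hP : 0 ≤ P) (hQ : 0 ≤ Q) :
    Real.sqrt (∑ i, P i) - Real.sqrt (∑ i, Q i) ≤
      Real.sqrt (∑ i, (Real.sqrt (P i) - Real.sqrt (Q i)) ^ 2) := by
  rw [← norm_sqrtVec hP, ← norm_sqrtVec hQ, ← dist_sqrtVec, dist_eq_norm]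
  exact norm_sub_norm_le _ _

lemma sum_sqrt_sub_sqrt_sq_le {P Q : ι → ℝ} (hP : 0 ≤ P) (hQ : 0 ≤ Q) :
    ∑ i, (Real.sqrt (P i) - Real.sqrt (Q i)) ^ 2 ≤ ∑ i, P i + ∑ i, Q i := by
  rw [← sum_add_distrib]
  refine sum_le_sum fun i _ => ?_
  have hp := Real.sq_sqrt (hP i)
  have hq := Real.sq_sqrt (hQ i)
  nlinarith [mul_nonneg (Real.sqrt_nonneg (P i)) (Real.sqrt_nonneg (Q i))]

end SqrtVector

lemma sqrt_two_mul_hellingerDist {m : ℕ} (P Q : Fin m → ℝ) :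
    Real.sqrt 2 * hellingerDist P Q =
      Real.sqrt (∑ i, (Real.sqrt (P i) - Real.sqrt (Q i)) ^ 2) := by
  rw [hellingerDist, ← mul_assoc, mul_one_div_cancel (by positivity), one_mul]

section DegVec

variable {V : Type*} [Fintype V] [DecidableEq V] (G : SimpleGraph V) [DecidableRel G.Adj]

lemma degVec_nonneg (v : V) : 0 ≤ degVec G v := fun _ => Nat.cast_nonneg _

lemma sum_degVec (v : V) : ∑ i, degVec G v i = G.degree v := by
  have hpos : ∀ w ∈ G.neighborFinset v, 0 < G.degree w := fun w hw =>
    G.degree_pos_iff_exists_adj w |>.mpr ⟨v, (G.mem_neighborFinset v w).mp hw |>.symm⟩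
  -- Neighbours are sorted into the fibres of `w ↦ deg w - 1` over `{0, …, Δ - 1}`.
  have hfib := card_eq_sum_card_fiberwise (t := range G.maxDegree)
    (f := fun w => G.degree w - 1) fun w hw => by
      have := G.degree_le_maxDegree w
      have := hpos w hw
      simp only [coe_range, Set.mem_Iio]
      omega
  simp only [degVec]
  norm_cast
  rw [← G.card_neighborFinset_eq_degree, hfib,
    Fin.sum_univ_eq_sum_range fun i => #{w ∈ G.neighborFinset v | G.degree w = i + 1}]
  refine sum_congr rfl fun i _ => congrArg card (filter_congr fun w hw => ?_)
  have := hpos w hw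
  omega

end DegVec

theorem hellinger_graph_bounds_general {V : Type*} [Fintype V] [DecidableEq V]
    (G : SimpleGraph V) [DecidableRel G.Adj] (x y : V) (k₁ k₂ : ℕ)
    (hx : G.degree x = k₁) (hy : G.degree y = k₂) :
    Real.sqrt k₁ - Real.sqrt k₂ ≤ Real.sqrt 2 * hellingerDist (degVec G x) (degVec G y) ∧
    Real.sqrt 2 * hellingerDist (degVec G x) (degVec G y) ≤ Real.sqrt (k₁ + k₂) := by
  have hsx : ∑ i, degVec G x i = k₁ := by rw [sum_degVec, hx]
  have hsy : ∑ i, degVec G y i = k₂ := by rw [sum_degVec, hy]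
  rw [sqrt_two_mul_hellingerDist, ← hsx, ← hsy]
  exact ⟨sqrt_sum_sub_sqrt_sum_le (degVec_nonneg G x) (degVec_nonneg G y),
    Real.sqrt_le_sqrt (sum_sqrt_sub_sqrt_sq_le (degVec_nonneg G x) (degVec_nonneg G y))⟩

/-- Theorem 1 (graph form): for vertices `x`, `y` of a finite simple graph with
`deg x = k₁ ≥ k₂ = deg y`, the node distance `d(x,y) = √2 · D_H(L_x‖L_y)` satisfies
`√k₁ − √k₂ ≤ d(x,y) ≤ √(k₁ + k₂)`. -/
theorem hellinger_graph_bounds {V : Type*} [Fintype V] [DecidableEq V]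
    (G : SimpleGraph V) [DecidableRel G.Adj] (x y : V) (k₁ k₂ : ℕ)
    (hx : G.degree x = k₁) (hy : G.degree y = k₂) (hk : k₂ ≤ k₁) :
    Real.sqrt k₁ - Real.sqrt k₂ ≤ Real.sqrt 2 * hellingerDist (degVec G x) (degVec G y) ∧
    Real.sqrt 2 * hellingerDist (degVec G x) (degVec G y) ≤ Real.sqrt (k₁ + k₂) :=
  hellinger_graph_bounds_general G x y k₁ k₂ hx hy
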